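/- Let Q₀ be a Γ-periodic (n×n)-matrix-valued function on ℝ^d with Q₀ ∈ L_∞. Then for every ε > 0 the operator of multiplication by Q₀^ε − Q̄₀ maps H¹(ℝ^d;ℂⁿ) continuously into H^{-1}(ℝ^d;ℂⁿ), and ‖[Q₀^ε − Q̄₀]‖_{H¹(ℝ^d)→H^{-1}(ℝ^d)} ≤ C_{Q₀} ε, where the constant C_{Q₀} is controlled in terms of d, ‖Q₀‖_{L_∞}, and the parameters of the lattice Γ. -/

import Mathlib

/-!
Fix an entry `g := (Q₀)ᵢₖ − (Q̄₀)ᵢₖ`; it is periodic with mean zero over the cell, hence over every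
translate `c + Ω`. Averaging `∫ g φ = ∫ g(x + h) φ(x + h) dx` over `h ∈ Ω` and subtracting the
vanishing average of `∫ g(x + h) φ(x) dx` gives
`|Ω| ∫ g φ = ∫_Ω ∫ g(x + h) (φ(x + h) − φ(x)) dx dh`, and the fundamental theorem of calculus along
segments bounds `‖φ(· + h) − φ‖_{L₁}` by `|h| ‖∇φ‖_{L₁}`. As `|h| ≤ R := ∑ⱼ |aⱼ|` on `Ω`, this
yields `|∫ g φ| ≤ 2 ‖Q₀‖_∞ R ‖∇φ‖_{L₁}`, and for `g(·/ε)` the cell `εΩ` has radius `εR`. Finally,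
for `φ = v̄ᵢ Fₖ` the Cauchy–Schwarz inequality gives `‖∇φ‖_{L₁} ≤ ‖F‖_{H¹} ‖v‖_{H¹}`.
-/

open MeasureTheory Set
open scoped ENNReal NNReal InnerProductSpace Pointwise ComplexConjugate

section Calculus

theorem enorm_sub_le_lintegral_enorm_deriv {G : Type*} [NormedAddCommGroup G] [NormedSpace ℝ G]
    [CompleteSpace G] {f : ℝ → G} {a b : ℝ} (hab : a ≤ b)
    (hf : ∀ t ∈ Icc a b, DifferentiableAt ℝ f t) :
    ‖f b - f a‖ₑ ≤ ∫⁻ t in Icc a b, ‖deriv f t‖ₑ := by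
  by_cases hfin : ∫⁻ t in Icc a b, ‖deriv f t‖ₑ = ∞
  · simp [hfin]
  have hint : IntegrableOn (deriv f) (Icc a b) :=
    ⟨aestronglyMeasurable_deriv _ _, lt_top_iff_ne_top.2 hfin⟩
  rw [← intervalIntegral.integral_eq_sub_of_hasDerivAt
      (fun t ht => (hf t (uIcc_of_le hab ▸ ht)).hasDerivAt)
      ((intervalIntegrable_iff_integrableOn_Icc_of_le hab).2 hint),
    intervalIntegral.integral_of_le hab]
  exact (enorm_integral_le_lintegral_enorm _).trans (lintegral_mono_set Ioc_subset_Icc_self)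

theorem norm_fderiv_inner_le {𝕜 E H : Type*} [RCLike 𝕜] [NormedAddCommGroup E] [NormedSpace ℝ E]
    [NormedAddCommGroup H] [InnerProductSpace 𝕜 H] [NormedSpace ℝ H] [IsScalarTower ℝ 𝕜 H]
    {f g : E → H} {x : E} (hf : DifferentiableAt ℝ f x) (hg : DifferentiableAt ℝ g x) :
    ‖fderiv ℝ (fun t => ⟪f t, g t⟫_𝕜) x‖ ≤
      ‖f x‖ * ‖fderiv ℝ g x‖ + ‖fderiv ℝ f x‖ * ‖g x‖ := by
  refine ContinuousLinearMap.opNorm_le_bound _ (by positivity) fun y => ?_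
  rw [fderiv_inner_apply 𝕜 hf hg]
  calc ‖⟪f x, fderiv ℝ g x y⟫_𝕜 + ⟪fderiv ℝ f x y, g x⟫_𝕜‖
      ≤ ‖f x‖ * ‖fderiv ℝ g x y‖ + ‖fderiv ℝ f x y‖ * ‖g x‖ :=
        (norm_add_le _ _).trans (add_le_add (norm_inner_le_norm _ _) (norm_inner_le_norm _ _))
    _ ≤ ‖f x‖ * (‖fderiv ℝ g x‖ * ‖y‖) + ‖fderiv ℝ f x‖ * ‖y‖ * ‖g x‖ := by
        gcongr <;> exact ContinuousLinearMap.le_opNorm _ _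
    _ = (‖f x‖ * ‖fderiv ℝ g x‖ + ‖fderiv ℝ f x‖ * ‖g x‖) * ‖y‖ := by ring

end Calculus

section IntegralInequalities

variable {α : Type*} [MeasurableSpace α] {μ : Measure α}

theorem integral_mul_le_sqrt_mul_sqrt {f g : α → ℝ} (hf₀ : 0 ≤ᵐ[μ] f) (hg₀ : 0 ≤ᵐ[μ] g)
    (hf : MemLp f 2 μ) (hg : MemLp g 2 μ) :
    ∫ x, f x * g x ∂μ ≤ √(∫ x, f x ^ 2 ∂μ) * √(∫ x, g x ^ 2 ∂μ) := by
  have := integral_mul_le_Lp_mul_Lq_of_nonneg Real.HolderConjugate.two_two hf₀ hg₀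
    (by rw [ENNReal.ofReal_ofNat]; exact hf) (by rw [ENNReal.ofReal_ofNat]; exact hg)
  simp only [Real.rpow_two, Real.sqrt_eq_rpow] at this ⊢
  convert this using 2

theorem integral_mul_add_mul_le_sqrt_mul_sqrt {f₁ f₂ g₁ g₂ : α → ℝ} (hf₁ : MemLp f₁ 2 μ)
    (hf₂ : MemLp f₂ 2 μ) (hg₁ : MemLp g₁ 2 μ) (hg₂ : MemLp g₂ 2 μ) :
    ∫ x, (f₁ x * g₁ x + f₂ x * g₂ x) ∂μ ≤
      √(∫ x, (f₁ x ^ 2 + f₂ x ^ 2) ∂μ) * √(∫ x, (g₁ x ^ 2 + g₂ x ^ 2) ∂μ) := by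
  have hsq : ∀ a b : ℝ, √(a ^ 2 + b ^ 2) ^ 2 = a ^ 2 + b ^ 2 := fun a b =>
    Real.sq_sqrt (by positivity)
  have hmem : ∀ u w : α → ℝ, MemLp u 2 μ → MemLp w 2 μ →
      MemLp (fun x => √(u x ^ 2 + w x ^ 2)) 2 μ := fun u w hu hw =>
    (memLp_two_iff_integrable_sq (Real.continuous_sqrt.comp_aestronglyMeasurable
      ((hu.1.pow 2).add (hw.1.pow 2)))).2 (by
        simp only [Pi.add_apply, Pi.pow_apply, hsq]
        exact hu.integrable_sq.add hw.integrable_sq)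
  set P := fun x => √(f₁ x ^ 2 + f₂ x ^ 2)
  set Q := fun x => √(g₁ x ^ 2 + g₂ x ^ 2)
  have hP : MemLp P 2 μ := hmem _ _ hf₁ hf₂
  have hQ : MemLp Q 2 μ := hmem _ _ hg₁ hg₂
  calc ∫ x, (f₁ x * g₁ x + f₂ x * g₂ x) ∂μ ≤ ∫ x, P x * Q x ∂μ := by
        refine integral_mono ((hf₁.integrable_mul hg₁).add (hf₂.integrable_mul hg₂))
          (hP.integrable_mul hQ) fun x => ?_
        simpa [Fin.sum_univ_two] using
          Real.sum_mul_le_sqrt_mul_sqrt Finset.univ ![f₁ x, f₂ x] ![g₁ x, g₂ x]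
    _ ≤ √(∫ x, P x ^ 2 ∂μ) * √(∫ x, Q x ^ 2 ∂μ) :=
        integral_mul_le_sqrt_mul_sqrt (.of_forall fun _ => Real.sqrt_nonneg _)
          (.of_forall fun _ => Real.sqrt_nonneg _) hP hQ
    _ = _ := by simp only [P, Q, hsq]

variable {G : Type*} [NormedAddCommGroup G] [NormedSpace ℝ G] {D : Set α}

theorem norm_le_of_setIntegral_eq_zero [CompleteSpace G] (hD0 : μ D ≠ 0) (hDtop : μ D ≠ ∞)
    {Φ : α → G} (hΦ : IntegrableOn Φ D μ) (hΦ0 : ∫ x in D, Φ x ∂μ = 0) {c : G} {B : ℝ}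
    (hB : ∀ x ∈ D, ‖c - Φ x‖ ≤ B) : ‖c‖ ≤ B := by
  have hD : 0 < μ.real D := ENNReal.toReal_pos hD0 hDtop
  have hmean : ∫ x in D, (c - Φ x) ∂μ = μ.real D • c := by
    rw [integral_sub (integrableOn_const (C := c) hDtop) hΦ, hΦ0, sub_zero, setIntegral_const]
  have := norm_setIntegral_le_of_norm_le_const hDtop.lt_top hB
  rw [hmean, norm_smul, Real.norm_of_nonneg hD.le, mul_comm] at this
  exact le_of_mul_le_mul_right this hD

theorem norm_setAverage_le_of_norm_le (hDtop : μ D ≠ ∞) {f : α → G} {C : ℝ} (hC₀ : 0 ≤ C)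
    (hC : ∀ x ∈ D, ‖f x‖ ≤ C) : ‖⨍ x in D, f x ∂μ‖ ≤ C := by
  rw [setAverage_eq, norm_smul, norm_inv, Real.norm_of_nonneg measureReal_nonneg]
  rcases (measureReal_nonneg (μ := μ) (s := D)).eq_or_lt with hD | hD
  · simpa [← hD] using hC₀
  rw [inv_mul_le_iff₀ hD, mul_comm]
  exact norm_setIntegral_le_of_norm_le_const hDtop.lt_top hC

end IntegralInequalities

section HaarMeasure

variable {E : Type*} [NormedAddCommGroup E] [NormedSpace ℝ E] [MeasurableSpace E] [BorelSpace E]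
  [FiniteDimensional ℝ E] (μ : Measure E) [μ.IsAddHaarMeasure]

section Translation

variable {G : Type*} [NormedAddCommGroup G] [NormedSpace ℝ G] [CompleteSpace G] {φ : E → G}

theorem lintegral_enorm_sub_comp_add_le (hφ : Differentiable ℝ φ) (h : E) :
    ∫⁻ x, ‖φ (x + h) - φ x‖ₑ ∂μ ≤ ‖h‖ₑ * ∫⁻ x, ‖fderiv ℝ φ x‖ₑ ∂μ := by
  have hsegment : ∀ x, ‖φ (x + h) - φ x‖ₑ ≤
      ∫⁻ t in Icc (0 : ℝ) 1, ‖fderiv ℝ φ (x + t • h)‖ₑ * ‖h‖ₑ := by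
    intro x
    have hderiv : ∀ t : ℝ,
        HasDerivAt (fun s : ℝ => φ (x + s • h)) (fderiv ℝ φ (x + t • h) h) t :=
      fun t => (hφ _).hasFDerivAt.comp_hasDerivAt t
        (by simpa using ((hasDerivAt_id t).smul_const h).const_add x)
    calc ‖φ (x + h) - φ x‖ₑ = ‖φ (x + (1 : ℝ) • h) - φ (x + (0 : ℝ) • h)‖ₑ := by simp
      _ ≤ ∫⁻ t in Icc (0 : ℝ) 1, ‖deriv (fun s : ℝ => φ (x + s • h)) t‖ₑ :=
        enorm_sub_le_lintegral_enorm_deriv zero_le_one fun t _ => (hderiv t).differentiableAt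
      _ ≤ _ := lintegral_mono fun t => (hderiv t).deriv ▸ ContinuousLinearMap.le_opENorm _ _
  have hmeas : Measurable fun p : E × ℝ => ‖fderiv ℝ φ (p.1 + p.2 • h)‖ₑ * ‖h‖ₑ :=
    ((measurable_fderiv ℝ φ).comp (by fun_prop)).enorm.mul_const _
  calc ∫⁻ x, ‖φ (x + h) - φ x‖ₑ ∂μ
      ≤ ∫⁻ x, (∫⁻ t in Icc (0 : ℝ) 1, ‖fderiv ℝ φ (x + t • h)‖ₑ * ‖h‖ₑ) ∂μ :=
        lintegral_mono hsegment
    _ = ∫⁻ t in Icc (0 : ℝ) 1, ∫⁻ x, ‖fderiv ℝ φ (x + t • h)‖ₑ * ‖h‖ₑ ∂μ :=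
        lintegral_lintegral_swap hmeas.aemeasurable
    _ = ∫⁻ t in Icc (0 : ℝ) 1, ‖h‖ₑ * ∫⁻ x, ‖fderiv ℝ φ x‖ₑ ∂μ := by
        refine lintegral_congr fun t => ?_
        rw [lintegral_mul_const' _ _ enorm_ne_top, mul_comm,
          lintegral_add_right_eq_self (fun y => ‖fderiv ℝ φ y‖ₑ) (t • h)]
    _ = ‖h‖ₑ * ∫⁻ x, ‖fderiv ℝ φ x‖ₑ ∂μ := by simp

theorem integral_norm_sub_comp_add_le (hφ : Differentiable ℝ φ)
    (hDφ : Integrable (fderiv ℝ φ) μ) (h : E) :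
    ∫ x, ‖φ (x + h) - φ x‖ ∂μ ≤ ‖h‖ * ∫ x, ‖fderiv ℝ φ x‖ ∂μ := by
  have hcont : Continuous fun x => φ (x + h) - φ x :=
    (hφ.continuous.comp (continuous_add_const h)).sub hφ.continuous
  rw [integral_norm_eq_lintegral_enorm hcont.aestronglyMeasurable,
    integral_norm_eq_lintegral_enorm hDφ.aestronglyMeasurable, ← toReal_enorm,
    ← ENNReal.toReal_mul]
  exact ENNReal.toReal_mono (ENNReal.mul_ne_top enorm_ne_top hDφ.2.ne)
    (lintegral_enorm_sub_comp_add_le μ hφ h)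

end Translation

variable {𝕜 : Type*} [RCLike 𝕜] {D : Set E} {R K : ℝ} {g ψ : E → 𝕜}

theorem norm_integral_mul_le_of_setIntegral_comp_add_eq_zero
    (hD0 : μ D ≠ 0) (hDR : D ⊆ Metric.closedBall 0 R)
    (hg : Measurable g) (hgK : ∀ x, ‖g x‖ ≤ K) (hg0 : ∀ c, ∫ u in D, g (c + u) ∂μ = 0)
    (hψ : Differentiable ℝ ψ) (hψi : Integrable ψ μ) (hDψ : Integrable (fderiv ℝ ψ) μ) :
    ‖∫ x, g x * ψ x ∂μ‖ ≤ K * R * ∫ x, ‖fderiv ℝ ψ x‖ ∂μ := by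
  have hDtop : μ D ≠ ∞ := (Metric.isBounded_closedBall.subset hDR).measure_lt_top.ne
  have hK : 0 ≤ K := (norm_nonneg _).trans (hgK 0)
  have hshift : ∀ h, ∀ f : E → 𝕜, Integrable f μ → Integrable (fun x => g (x + h) * f x) μ :=
    fun h f hf => hf.bdd_mul (hg.comp (measurable_add_const h)).aestronglyMeasurable
      (.of_forall fun _ => hgK _)
  have hprod : Integrable (fun p : E × E => g (p.2 + p.1) * ψ p.2) ((μ.restrict D).prod μ) :=
    ((integrableOn_const (C := K) hDtop).mul_prod hψi.norm).mono'
      ((hg.comp (by fun_prop)).mul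
        (hψ.continuous.measurable.comp measurable_snd)).aestronglyMeasurable
      (.of_forall fun p => by rw [norm_mul]; gcongr; exact hgK _)
  refine norm_le_of_setIntegral_eq_zero hD0 hDtop hprod.integral_prod_left ?_ fun h hh => ?_
  · rw [integral_integral_swap hprod]
    simp [integral_mul_const, hg0]
  calc ‖∫ x, g x * ψ x ∂μ - ∫ x, g (x + h) * ψ x ∂μ‖
      = ‖∫ x, g (x + h) * (ψ (x + h) - ψ x) ∂μ‖ := by
        simp_rw [mul_sub]
        rw [integral_sub (hshift h _ (hψi.comp_add_right h)) (hshift h ψ hψi),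
          integral_add_right_eq_self (fun x => g x * ψ x) h]
    _ ≤ ∫ x, K * ‖ψ (x + h) - ψ x‖ ∂μ := by
        refine norm_integral_le_of_norm_le ((hψi.comp_add_right h |>.sub hψi).norm.const_mul K)
          (.of_forall fun x => ?_)
        rw [norm_mul]; gcongr; exact hgK _
    _ ≤ K * (‖h‖ * ∫ x, ‖fderiv ℝ ψ x‖ ∂μ) := by
        rw [integral_const_mul]
        gcongr
        exact integral_norm_sub_comp_add_le μ hψ hDψ h
    _ ≤ K * R * ∫ x, ‖fderiv ℝ ψ x‖ ∂μ := by
        rw [← mul_assoc]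
        have : 0 ≤ ∫ x, ‖fderiv ℝ ψ x‖ ∂μ := integral_nonneg fun _ => norm_nonneg _
        gcongr
        simpa using hDR hh

theorem norm_integral_mul_comp_inv_smul_le
    (hD0 : μ D ≠ 0) (hDR : D ⊆ Metric.closedBall 0 R)
    (hg : Measurable g) (hgK : ∀ x, ‖g x‖ ≤ K) (hg0 : ∀ c, ∫ u in D, g (c + u) ∂μ = 0)
    (hψ : Differentiable ℝ ψ) (hψi : Integrable ψ μ) (hDψ : Integrable (fderiv ℝ ψ) μ)
    {ε : ℝ} (hε : 0 < ε) :
    ‖∫ x, g (ε⁻¹ • x) * ψ x ∂μ‖ ≤ K * (ε * R) * ∫ x, ‖fderiv ℝ ψ x‖ ∂μ := by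
  refine norm_integral_mul_le_of_setIntegral_comp_add_eq_zero μ (D := ε • D)
    ?_ ?_ (hg.comp (measurable_const_smul _)) (fun x => hgK _) (fun c => ?_) hψ hψi hDψ
  · simp [Measure.addHaar_smul, hε.ne', hD0]
  · simpa [smul_closedBall' hε.ne', abs_of_pos hε] using Set.smul_set_mono (a := ε) hDR
  · have := Measure.setIntegral_comp_smul_of_pos μ (fun u => g (ε⁻¹ • (c + u))) D hε
    simp only [smul_add, inv_smul_smul₀ hε.ne', hg0] at this
    simpa [hε.ne'] using this.symm

end HaarMeasure

section Lattice

variable {E : Type*} [NormedAddCommGroup E] [NormedSpace ℝ E] {ι : Type*} (b : Module.Basis ι ℝ E)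

namespace ZSpan

/-- Half-open, hence an exact fundamental domain; the open cell differs from it by a null set. -/
def centeredFundamentalDomain : Set E := {x | ∀ i, b.repr x i ∈ Ico (-(1 / 2) : ℝ) (1 / 2)}

@[simp]
theorem mem_centeredFundamentalDomain {x : E} :
    x ∈ centeredFundamentalDomain b ↔ ∀ i, b.repr x i ∈ Ico (-(1 / 2) : ℝ) (1 / 2) := Iff.rfl

end ZSpan

theorem Module.Basis.addHaar_setOf_repr_eq [MeasurableSpace E] [BorelSpace E]
    [FiniteDimensional ℝ E] (μ : Measure E) [μ.IsAddHaarMeasure] (i : ι) (t : ℝ) :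
    μ {x | b.repr x i = t} = 0 := by
  have hker : LinearMap.ker (b.coord i) ≠ ⊤ := fun h => by
    simpa using LinearMap.mem_ker.1 (h ▸ Submodule.mem_top : b i ∈ LinearMap.ker (b.coord i))
  have hlevel : {x | b.repr x i = t} = (t • b i) +ᵥ (LinearMap.ker (b.coord i) : Set E) := by
    ext x
    simp [mem_vadd_set_iff_neg_vadd_mem]
    constructor <;> intro h <;> linarith
  rw [hlevel, measure_vadd, Measure.addHaar_submodule μ _ hker]

variable [Fintype ι]

theorem Module.Basis.setOf_exists_eq_sum_smul (s : Set ℝ) :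
    {x | ∃ τ : ι → ℝ, (∀ j, τ j ∈ s) ∧ x = ∑ j, τ j • b j} = {x | ∀ j, b.repr x j ∈ s} := by
  ext x
  constructor
  · rintro ⟨τ, hτ, rfl⟩ j
    rw [b.repr_sum_self]
    exact hτ j
  · exact fun h => ⟨_, h, (b.sum_repr x).symm⟩

namespace ZSpan

theorem centeredFundamentalDomain_eq_vadd :
    centeredFundamentalDomain b = (-∑ i, (1 / 2 : ℝ) • b i) +ᵥ fundamentalDomain b := by
  ext x
  have hrepr : ∀ i, b.repr (∑ j, (1 / 2 : ℝ) • b j) i = 1 / 2 := fun i =>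
    congrFun (b.repr_sum_self fun _ => (1 / 2 : ℝ)) i
  simp only [mem_centeredFundamentalDomain, mem_vadd_set_iff_neg_vadd_mem, neg_neg,
    vadd_eq_add, mem_fundamentalDomain, map_add, Finsupp.add_apply, hrepr, mem_Ico]
  refine forall_congr' fun i => ?_
  constructor <;> rintro ⟨h₁, h₂⟩ <;> constructor <;> linarith

theorem centeredFundamentalDomain_subset_closedBall :
    centeredFundamentalDomain b ⊆ Metric.closedBall 0 (∑ i, ‖b i‖) := by
  intro x hx
  rw [mem_closedBall_zero_iff, ← b.sum_repr x]
  refine (norm_sum_le _ _).trans (Finset.sum_le_sum fun i _ => ?_)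
  rw [norm_smul]
  refine mul_le_of_le_one_left (norm_nonneg _) ?_
  obtain ⟨h₁, h₂⟩ := hx i
  rw [Real.norm_eq_abs, abs_le]
  constructor <;> linarith

variable [MeasurableSpace E] [BorelSpace E] [FiniteDimensional ℝ E] (μ : Measure E)
  [μ.IsAddHaarMeasure]

theorem isAddFundamentalDomain_centeredFundamentalDomain :
    IsAddFundamentalDomain (Submodule.span ℤ (range b)).toAddSubgroup
      (centeredFundamentalDomain b) μ := by
  rw [centeredFundamentalDomain_eq_vadd]
  exact (ZSpan.isAddFundamentalDomain' b μ).vadd_of_comm _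

theorem measure_centeredFundamentalDomain_ne_zero : μ (centeredFundamentalDomain b) ≠ 0 := by
  rw [centeredFundamentalDomain_eq_vadd, measure_vadd]
  exact measure_fundamentalDomain_ne_zero b

theorem setOf_repr_mem_Ioo_ae_eq_centeredFundamentalDomain :
    {x | ∀ i, b.repr x i ∈ Ioo (-(1 / 2) : ℝ) (1 / 2)} =ᵐ[μ] centeredFundamentalDomain b := by
  refine ae_eq_set.2 ⟨?_, measure_mono_null ?_ (measure_iUnion_null fun i =>
    b.addHaar_setOf_repr_eq μ i (-(1 / 2)))⟩
  · exact measure_mono_null (fun x ⟨hx, hxD⟩ => hxD fun i => Ioo_subset_Ico_self (hx i))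
      measure_empty
  · rintro x ⟨hxD, hxΩ⟩
    obtain ⟨i, hi⟩ := not_forall.1 hxΩ
    exact mem_iUnion.2 ⟨i, ((hxD i).1.eq_or_lt.resolve_right fun h => hi ⟨h, (hxD i).2⟩).symm⟩

end ZSpan

variable [MeasurableSpace E] [BorelSpace E] [FiniteDimensional ℝ E] (μ : Measure E)
  [μ.IsAddHaarMeasure]

namespace MeasureTheory.IsAddFundamentalDomain

variable {F : Type*} [NormedAddCommGroup F] [NormedSpace ℝ F] {L : AddSubgroup E} [Countable L]
  {D : Set E}

theorem setIntegral_add_left_eq_self (hD : IsAddFundamentalDomain L D μ)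
    {f : E → F} (hf : ∀ γ ∈ L, ∀ x, f (γ + x) = f x) (c : E) :
    ∫ u in D, f (c + u) ∂μ = ∫ u in D, f u ∂μ := by
  rw [← (measurePreserving_add_left μ c).setIntegral_image_emb
      (Homeomorph.addLeft c).measurableEmbedding f D]
  exact (hD.vadd_of_comm c).setIntegral_eq hD fun γ x => hf γ γ.2 x

theorem setIntegral_comp_add_sub_setAverage_eq_zero [CompleteSpace F]
    (hD : IsAddFundamentalDomain L D μ) (hD0 : μ D ≠ 0) (hDtop : μ D ≠ ∞) {f : E → F}
    (hf : ∀ γ ∈ L, ∀ x, f (γ + x) = f x) (hfi : IntegrableOn f D μ) (c : E) :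
    ∫ u in D, (f (c + u) - ⨍ x in D, f x ∂μ) ∂μ = 0 := by
  rw [hD.setIntegral_add_left_eq_self μ (f := fun u => f u - ⨍ x in D, f x ∂μ)
      (fun γ hγ x => by rw [hf γ hγ x]) c,
    integral_sub hfi (integrableOn_const hDtop), setIntegral_const, setAverage_eq,
    smul_inv_smul₀ ((measureReal_ne_zero_iff hDtop).2 hD0), sub_self]

end MeasureTheory.IsAddFundamentalDomain

theorem norm_integral_periodic_sub_setAverage_mul_le {𝕜 : Type*} [RCLike 𝕜] {f ψ : E → 𝕜} {K : ℝ}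
    (hf : Measurable f) (hfK : ∀ x, ‖f x‖ ≤ K)
    (hper : ∀ γ ∈ Submodule.span ℤ (range b), ∀ x, f (γ + x) = f x)
    (hψ : Differentiable ℝ ψ) (hψi : Integrable ψ μ) (hDψ : Integrable (fderiv ℝ ψ) μ)
    {ε : ℝ} (hε : 0 < ε) :
    ‖∫ x, (f (ε⁻¹ • x) - ⨍ u in ZSpan.centeredFundamentalDomain b, f u ∂μ) * ψ x ∂μ‖ ≤
      2 * K * (ε * ∑ i, ‖b i‖) * ∫ x, ‖fderiv ℝ ψ x‖ ∂μ := by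
  have : Countable (Submodule.span ℤ (range b)).toAddSubgroup :=
    inferInstanceAs (Countable (Submodule.span ℤ (range b)))
  have hDR := ZSpan.centeredFundamentalDomain_subset_closedBall b
  have hD0 := ZSpan.measure_centeredFundamentalDomain_ne_zero b μ
  have hDtop : μ (ZSpan.centeredFundamentalDomain b) ≠ ∞ :=
    (Metric.isBounded_closedBall.subset hDR).measure_lt_top.ne
  have hK : 0 ≤ K := (norm_nonneg _).trans (hfK 0)
  have havg : ‖⨍ u in ZSpan.centeredFundamentalDomain b, f u ∂μ‖ ≤ K :=
    norm_setAverage_le_of_norm_le hDtop hK fun x _ => hfK x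
  refine norm_integral_mul_comp_inv_smul_le μ hD0 hDR (hf.sub measurable_const)
    (fun x => (norm_sub_le _ _).trans (by linarith [hfK x])) (fun c => ?_) hψ hψi hDψ hε
  exact (ZSpan.isAddFundamentalDomain_centeredFundamentalDomain b μ
    ).setIntegral_comp_add_sub_setAverage_eq_zero μ hD0 hDtop hper
    (Measure.integrableOn_of_bounded hDtop hf.aestronglyMeasurable (.of_forall hfK)) c

end Lattice

section VectorFunctions

variable {α 𝕜 ι : Type*} [MeasurableSpace α] {μ : Measure α} [RCLike 𝕜] [Fintype ι]
  {F v : α → EuclideanSpace 𝕜 ι}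

theorem integrable_inner_apply [TopologicalSpace α] [OpensMeasurableSpace α]
    (hF : Continuous F) (hv : Continuous v) (hF2 : MemLp (fun x => ‖F x‖) 2 μ)
    (hv2 : MemLp (fun x => ‖v x‖) 2 μ) (i k : ι) :
    Integrable (fun x => ⟪v x i, F x k⟫_𝕜) μ :=
  (hv2.integrable_mul hF2).mono' (by fun_prop : Continuous _).aestronglyMeasurable
    (.of_forall fun x => (norm_inner_le_norm _ _).trans
      (mul_le_mul (PiLp.norm_apply_le _ i) (PiLp.norm_apply_le _ k) (norm_nonneg _)
        (norm_nonneg _)))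

theorem norm_integral_sum_conj_mul_sum_le (G : α → ι → ι → 𝕜) {B : ℝ}
    (hG : ∀ i k, Integrable (fun x => G x i k * ⟪v x i, F x k⟫_𝕜) μ)
    (hB : ∀ i k, ‖∫ x, G x i k * ⟪v x i, F x k⟫_𝕜 ∂μ‖ ≤ B) :
    ‖∫ x, ∑ i, conj (v x i) * ∑ k, G x i k * F x k ∂μ‖ ≤ Fintype.card ι ^ 2 * B := by
  have hsum : ∀ x, ∑ i, conj (v x i) * ∑ k, G x i k * F x k =
      ∑ i, ∑ k, G x i k * ⟪v x i, F x k⟫_𝕜 := fun x => by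
    simp_rw [Finset.mul_sum, RCLike.inner_apply']
    exact Finset.sum_congr rfl fun i _ => Finset.sum_congr rfl fun k _ => by ring
  simp_rw [hsum]
  rw [integral_finsetSum _ fun i _ => integrable_finsetSum _ fun k _ => hG i k]
  simp_rw [integral_finsetSum _ fun k _ => hG _ k]
  calc ‖∑ i, ∑ k, ∫ x, G x i k * ⟪v x i, F x k⟫_𝕜 ∂μ‖
      ≤ ∑ i : ι, ∑ k : ι, B := (norm_sum_le _ _).trans
        (Finset.sum_le_sum fun i _ => (norm_sum_le _ _).trans
          (Finset.sum_le_sum fun k _ => hB i k))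
    _ = Fintype.card ι ^ 2 * B := by simp [sq, mul_assoc]

end VectorFunctions

section SobolevPairing

variable {E 𝕜 ι : Type*} [RCLike 𝕜] [Fintype ι] [NormedAddCommGroup E] [NormedSpace ℝ E]
  {F v : E → EuclideanSpace 𝕜 ι}

theorem norm_fderiv_inner_apply_le {x : E} (hF : DifferentiableAt ℝ F x)
    (hv : DifferentiableAt ℝ v x) (i k : ι) :
    ‖fderiv ℝ (fun y => ⟪v y i, F y k⟫_𝕜) x‖ ≤
      ‖F x‖ * ‖fderiv ℝ v x‖ + ‖fderiv ℝ F x‖ * ‖v x‖ := by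
  have hcoord : ∀ {G : E → EuclideanSpace 𝕜 ι}, DifferentiableAt ℝ G x → ∀ j,
      HasFDerivAt (fun y => G y j) (PiLp.proj 2 (fun _ => 𝕜) j ∘L fderiv ℝ G x) x := by
    intro G hG j
    have := (PiLp.hasFDerivAt_apply (𝕜 := ℝ) 2 (G x) j).comp x hG.hasFDerivAt
    exact this
  have hcoord_le : ∀ {G : E → EuclideanSpace 𝕜 ι} j,
      ‖PiLp.proj 2 (fun _ => 𝕜) j ∘L fderiv ℝ G x‖ ≤ ‖fderiv ℝ G x‖ := fun j =>
    ContinuousLinearMap.opNorm_le_bound _ (norm_nonneg _) fun y =>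
      (PiLp.norm_apply_le _ j).trans (ContinuousLinearMap.le_opNorm _ _)
  calc ‖fderiv ℝ (fun y => ⟪v y i, F y k⟫_𝕜) x‖
      ≤ ‖v x i‖ * ‖fderiv ℝ (fun y => F y k) x‖ + ‖fderiv ℝ (fun y => v y i) x‖ * ‖F x k‖ :=
        norm_fderiv_inner_le (hcoord hv i).differentiableAt (hcoord hF k).differentiableAt
    _ ≤ ‖v x‖ * ‖fderiv ℝ F x‖ + ‖fderiv ℝ v x‖ * ‖F x‖ := by
        rw [(hcoord hF k).fderiv, (hcoord hv i).fderiv]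
        gcongr
        exacts [PiLp.norm_apply_le _ i, hcoord_le k, hcoord_le i, PiLp.norm_apply_le _ k]
    _ = ‖F x‖ * ‖fderiv ℝ v x‖ + ‖fderiv ℝ F x‖ * ‖v x‖ := by ring

variable [MeasurableSpace E] [BorelSpace E] [FiniteDimensional ℝ E] {μ : Measure E}

theorem integrable_fderiv_inner_apply (hF : Differentiable ℝ F) (hv : Differentiable ℝ v)
    (hF2 : MemLp (fun x => ‖F x‖) 2 μ) (hDF2 : MemLp (fun x => ‖fderiv ℝ F x‖) 2 μ)
    (hv2 : MemLp (fun x => ‖v x‖) 2 μ) (hDv2 : MemLp (fun x => ‖fderiv ℝ v x‖) 2 μ) (i k : ι) :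
    Integrable (fderiv ℝ (fun x => ⟪v x i, F x k⟫_𝕜)) μ := by
  have hW : Integrable (fun x => ‖F x‖ * ‖fderiv ℝ v x‖ + ‖fderiv ℝ F x‖ * ‖v x‖) μ :=
    (hF2.integrable_mul hDv2).add (hDF2.integrable_mul hv2)
  exact hW.mono' (measurable_fderiv ℝ _).aestronglyMeasurable
    (.of_forall fun x => norm_fderiv_inner_apply_le (hF x) (hv x) i k)

theorem integral_norm_fderiv_inner_apply_le (hF : Differentiable ℝ F) (hv : Differentiable ℝ v)
    (hF2 : MemLp (fun x => ‖F x‖) 2 μ) (hDF2 : MemLp (fun x => ‖fderiv ℝ F x‖) 2 μ)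
    (hv2 : MemLp (fun x => ‖v x‖) 2 μ) (hDv2 : MemLp (fun x => ‖fderiv ℝ v x‖) 2 μ) (i k : ι) :
    ∫ x, ‖fderiv ℝ (fun y => ⟪v y i, F y k⟫_𝕜) x‖ ∂μ ≤
      √(∫ x, (‖F x‖ ^ 2 + ‖fderiv ℝ F x‖ ^ 2) ∂μ) *
        √(∫ x, (‖v x‖ ^ 2 + ‖fderiv ℝ v x‖ ^ 2) ∂μ) := by
  have hW : Integrable (fun x => ‖F x‖ * ‖fderiv ℝ v x‖ + ‖fderiv ℝ F x‖ * ‖v x‖) μ :=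
    (hF2.integrable_mul hDv2).add (hDF2.integrable_mul hv2)
  calc ∫ x, ‖fderiv ℝ (fun y => ⟪v y i, F y k⟫_𝕜) x‖ ∂μ
      ≤ ∫ x, (‖F x‖ * ‖fderiv ℝ v x‖ + ‖fderiv ℝ F x‖ * ‖v x‖) ∂μ :=
        integral_mono (integrable_fderiv_inner_apply hF hv hF2 hDF2 hv2 hDv2 i k).norm hW
          fun x => norm_fderiv_inner_apply_le (hF x) (hv x) i k
    _ ≤ √(∫ x, (‖F x‖ ^ 2 + ‖fderiv ℝ F x‖ ^ 2) ∂μ) *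
          √(∫ x, (‖fderiv ℝ v x‖ ^ 2 + ‖v x‖ ^ 2) ∂μ) :=
        integral_mul_add_mul_le_sqrt_mul_sqrt hF2 hDF2 hDv2 hv2
    _ = _ := by simp_rw [add_comm (‖fderiv ℝ v _‖ ^ 2)]

end SobolevPairing

section MatrixEntry

variable {E 𝕜 ι κ : Type*} [RCLike 𝕜] [Fintype ι] [Fintype κ] [NormedAddCommGroup E]
  [NormedSpace ℝ E] [MeasurableSpace E] [BorelSpace E] [FiniteDimensional ℝ E]
  (b : Module.Basis κ ℝ E) (μ : Measure E) [μ.IsAddHaarMeasure] {F v : E → EuclideanSpace 𝕜 ι}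

theorem norm_integral_periodic_sub_setAverage_mul_inner_apply_le {f : E → 𝕜} {K : ℝ}
    (hf : Measurable f) (hfK : ∀ x, ‖f x‖ ≤ K)
    (hper : ∀ γ ∈ Submodule.span ℤ (range b), ∀ x, f (γ + x) = f x)
    (hF : Differentiable ℝ F) (hv : Differentiable ℝ v)
    (hF2 : MemLp (fun x => ‖F x‖) 2 μ) (hDF2 : MemLp (fun x => ‖fderiv ℝ F x‖) 2 μ)
    (hv2 : MemLp (fun x => ‖v x‖) 2 μ) (hDv2 : MemLp (fun x => ‖fderiv ℝ v x‖) 2 μ)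
    (i k : ι) {ε : ℝ} (hε : 0 < ε) :
    ‖∫ x, (f (ε⁻¹ • x) - ⨍ u in ZSpan.centeredFundamentalDomain b, f u ∂μ) *
        ⟪v x i, F x k⟫_𝕜 ∂μ‖ ≤
      2 * K * (ε * ∑ j, ‖b j‖) * (√(∫ x, (‖F x‖ ^ 2 + ‖fderiv ℝ F x‖ ^ 2) ∂μ) *
        √(∫ x, (‖v x‖ ^ 2 + ‖fderiv ℝ v x‖ ^ 2) ∂μ)) := by
  have hK : 0 ≤ K := (norm_nonneg _).trans (hfK 0)
  refine (norm_integral_periodic_sub_setAverage_mul_le b μ hf hfK hper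
    (((differentiable_piLp 2).1 hv i).inner 𝕜 ((differentiable_piLp 2).1 hF k))
    (integrable_inner_apply hF.continuous hv.continuous hF2 hv2 i k)
    (integrable_fderiv_inner_apply hF hv hF2 hDF2 hv2 hDv2 i k) hε).trans ?_
  gcongr
  exact integral_norm_fderiv_inner_apply_le hF hv hF2 hDF2 hv2 hDv2 i k

end MatrixEntry

theorem statement8_general
    {d n : ℕ}
    -- the lattice basis `a₁, …, a_d` of `Γ`
    (a : Fin d → EuclideanSpace ℝ (Fin d)) (ha : LinearIndependent ℝ a)
    -- the elementary cell `Ω = {∑ τ_j a_j : −1/2 < τ_j < 1/2}`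
    (Ω : Set (EuclideanSpace ℝ (Fin d)))
    (hΩ : Ω = {x | ∃ τ : Fin d → ℝ,
      (∀ j, τ j ∈ Set.Ioo (-(1 / 2) : ℝ) (1 / 2)) ∧ x = ∑ j, τ j • a j})
    -- `Q₀` : a `Γ`-periodic `(n×n)`-matrix-valued function with `Q₀ ∈ L_∞`
    (Q₀ : EuclideanSpace ℝ (Fin d) → Fin n → Fin n → ℂ)
    (hQmeas : Measurable Q₀)
    (hQper : ∀ (x : EuclideanSpace ℝ (Fin d)) (k : Fin d → ℤ),
      Q₀ (x + ∑ j, k j • a j) = Q₀ x)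
    (M : ℝ) (hQbdd : ∀ x i k, ‖Q₀ x i k‖ ≤ M)
    -- `Q̄₀ = |Ω|⁻¹ ∫_Ω Q₀(x) dx`, the mean value of `Q₀`
    (Qbar : Fin n → Fin n → ℂ)
    (hQbar : ∀ i k, Qbar i k = ((volume Ω).toReal)⁻¹ • ∫ x in Ω, Q₀ x i k) :
    -- `∃ C_{Q₀}` (controlled in terms of `d`, `‖Q₀‖_{L_∞}` and `Γ`) such that
    -- `‖[Q₀^ε − Q̄₀]‖_{H¹(ℝ^d)→H^{-1}(ℝ^d)} ≤ C_{Q₀} ε` for all `ε > 0`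
    ∃ C : ℝ, 0 < C ∧
      ∀ ε : ℝ, 0 < ε →
        ∀ F v : EuclideanSpace ℝ (Fin d) → EuclideanSpace ℂ (Fin n),
          Differentiable ℝ F → Differentiable ℝ v →
          Integrable (fun x => ‖F x‖ ^ 2) → Integrable (fun x => ‖fderiv ℝ F x‖ ^ 2) →
          Integrable (fun x => ‖v x‖ ^ 2) → Integrable (fun x => ‖fderiv ℝ v x‖ ^ 2) →
          ‖∫ x, ∑ i, (starRingEnd ℂ) (v x i) *
              (∑ k, (Q₀ (ε⁻¹ • x) i k - Qbar i k) * F x k)‖ ≤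
            C * ε * Real.sqrt (∫ x, (‖F x‖ ^ 2 + ‖fderiv ℝ F x‖ ^ 2)) *
              Real.sqrt (∫ x, (‖v x‖ ^ 2 + ‖fderiv ℝ v x‖ ^ 2)) := by
  obtain ⟨b, rfl⟩ : ∃ b : Module.Basis (Fin d) ℝ (EuclideanSpace ℝ (Fin d)), ⇑b = a :=
    ⟨_, coe_basisOfLinearIndependentOfCardEqFinrank' a ha (by simp)⟩
  have hΩD : Ω =ᵐ[volume] ZSpan.centeredFundamentalDomain b := by
    rw [hΩ, b.setOf_exists_eq_sum_smul]
    exact ZSpan.setOf_repr_mem_Ioo_ae_eq_centeredFundamentalDomain b volume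
  have hQbar_avg : ∀ i k, Qbar i k = ⨍ x in ZSpan.centeredFundamentalDomain b, Q₀ x i k := by
    intro i k
    rw [hQbar, setAverage_eq, measureReal_def, measure_congr hΩD, setIntegral_congr_set hΩD]
  have hper : ∀ i k, ∀ γ ∈ Submodule.span ℤ (range b), ∀ x, Q₀ (γ + x) i k = Q₀ x i k := by
    intro i k γ hγ x
    obtain ⟨c, rfl⟩ := (Submodule.mem_span_range_iff_exists_fun ℤ).1 hγ
    rw [add_comm, hQper]
  have hQ : ∀ i k, Measurable fun x => Q₀ x i k := fun i k => by fun_prop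
  have hL2 : ∀ {f : EuclideanSpace ℝ (Fin d) → ℝ}, Measurable f →
      Integrable (fun x => f x ^ 2) → MemLp f 2 volume :=
    fun hf => (memLp_two_iff_integrable_sq hf.aestronglyMeasurable).2
  refine ⟨2 * n ^ 2 * |M| * ∑ j, ‖b j‖ + 1, by positivity,
    fun ε hε F v hF hv hF2 hDF2 hv2 hDv2 => ?_⟩
  replace hF2 := hL2 hF.continuous.norm.measurable hF2
  replace hv2 := hL2 hv.continuous.norm.measurable hv2
  replace hDF2 := hL2 (measurable_fderiv ℝ F).norm hDF2
  replace hDv2 := hL2 (measurable_fderiv ℝ v).norm hDv2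
  refine (norm_integral_sum_conj_mul_sum_le (fun x i k => Q₀ (ε⁻¹ • x) i k - Qbar i k)
    (fun i k => (integrable_inner_apply hF.continuous hv.continuous hF2 hv2 i k).bdd_mul
      (((hQ i k).comp (measurable_const_smul _)).sub measurable_const).aestronglyMeasurable
      (.of_forall fun x => norm_sub_le_of_le (hQbdd _ i k) le_rfl))
    fun i k => hQbar_avg i k ▸ norm_integral_periodic_sub_setAverage_mul_inner_apply_le b volume
      (hQ i k) (fun x => (hQbdd x i k).trans (le_abs_self M)) (hper i k)
      hF hv hF2 hDF2 hv2 hDv2 i k hε).trans ?_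
  set X := √(∫ x, (‖F x‖ ^ 2 + ‖fderiv ℝ F x‖ ^ 2))
  set Y := √(∫ x, (‖v x‖ ^ 2 + ‖fderiv ℝ v x‖ ^ 2))
  have hεXY : 0 ≤ ε * X * Y := by positivity
  rw [Fintype.card_fin]
  nlinarith

theorem statement8
    {d n : ℕ} (hd : 0 < d)
    -- the lattice basis `a₁, …, a_d` of `Γ`
    (a : Fin d → EuclideanSpace ℝ (Fin d)) (ha : LinearIndependent ℝ a)
    -- the elementary cell `Ω = {∑ τ_j a_j : −1/2 < τ_j < 1/2}`
    (Ω : Set (EuclideanSpace ℝ (Fin d)))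
    (hΩ : Ω = {x | ∃ τ : Fin d → ℝ,
      (∀ j, τ j ∈ Set.Ioo (-(1 / 2) : ℝ) (1 / 2)) ∧ x = ∑ j, τ j • a j})
    -- `Q₀` : a `Γ`-periodic `(n×n)`-matrix-valued function with `Q₀ ∈ L_∞`
    (Q₀ : EuclideanSpace ℝ (Fin d) → Fin n → Fin n → ℂ)
    (hQmeas : Measurable Q₀)
    (hQper : ∀ (x : EuclideanSpace ℝ (Fin d)) (k : Fin d → ℤ),
      Q₀ (x + ∑ j, k j • a j) = Q₀ x)
    (M : ℝ) (hQbdd : ∀ x i k, ‖Q₀ x i k‖ ≤ M)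
    -- `Q̄₀ = |Ω|⁻¹ ∫_Ω Q₀(x) dx`, the mean value of `Q₀`
    (Qbar : Fin n → Fin n → ℂ)
    (hQbar : ∀ i k, Qbar i k = ((volume Ω).toReal)⁻¹ • ∫ x in Ω, Q₀ x i k) :
    -- `∃ C_{Q₀}` (controlled in terms of `d`, `‖Q₀‖_{L_∞}` and `Γ`) such that
    -- `‖[Q₀^ε − Q̄₀]‖_{H¹(ℝ^d)→H^{-1}(ℝ^d)} ≤ C_{Q₀} ε` for all `ε > 0`
    ∃ C : ℝ, 0 < C ∧
      ∀ ε : ℝ, 0 < ε →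
        ∀ F v : EuclideanSpace ℝ (Fin d) → EuclideanSpace ℂ (Fin n),
          Differentiable ℝ F → Differentiable ℝ v →
          Integrable (fun x => ‖F x‖ ^ 2) → Integrable (fun x => ‖fderiv ℝ F x‖ ^ 2) →
          Integrable (fun x => ‖v x‖ ^ 2) → Integrable (fun x => ‖fderiv ℝ v x‖ ^ 2) →
          ‖∫ x, ∑ i, (starRingEnd ℂ) (v x i) *
              (∑ k, (Q₀ (ε⁻¹ • x) i k - Qbar i k) * F x k)‖ ≤
            C * ε * Real.sqrt (∫ x, (‖F x‖ ^ 2 + ‖fderiv ℝ F x‖ ^ 2)) *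
              Real.sqrt (∫ x, (‖v x‖ ^ 2 + ‖fderiv ℝ v x‖ ^ 2)) :=
  statement8_general a ha Ω hΩ Q₀ hQmeas hQper M hQbdd Qbar hQbar
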